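/- Let n ≥ 2, let g be a symmetric invertible n×n real matrix with inverse matrix G, let R : Fin n → Fin n → Fin n → Fin n → ℝ be a (0,4)-tensor and S : Fin n → Fin n → ℝ a (0,2)-tensor. Define R̄ m i j k = R m i j k + g m k * S i j − g m j * S i k + g i j * S m k − g i k * S m j. For a (0,4)-tensor T define Ric(T) i j = Σ_{m,k} G m k * T m i j k, sc(T) = Σ_{i,j} G i j * Ric(T) i j, and Z(T) m i j k = T m i j k − (sc(T)/(n*(n−1))) * (g m k * g i j − g m j * g i k). Let trS = Σ_{m,k} G m k * S m k. Then for all indices m, i, j, k: Z(R̄) m i j k = Z(R) m i j k + g m k * S i j − g m j * S i k + g i j * S m k − g i k * S m j − (2*trS/n) * (g m k * g i j − g m j * g i k). -/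

import Mathlib

/-- Ricci contraction of a (0,4)-tensor: `Ric(T) i j = Σ_{m,k} G m k * T m i j k`. -/
noncomputable def ricci04 {n : ℕ} (G : Fin n → Fin n → ℝ)
    (T : Fin n → Fin n → Fin n → Fin n → ℝ) (i j : Fin n) : ℝ :=
  ∑ m, ∑ k, G m k * T m i j k

/-- Scalar of a (0,4)-tensor: `sc(T) = Σ_{i,j} G i j * Ric(T) i j`. -/
noncomputable def scalar04 {n : ℕ} (G : Fin n → Fin n → ℝ)
    (T : Fin n → Fin n → Fin n → Fin n → ℝ) : ℝ :=
  ∑ i, ∑ j, G i j * ricci04 G T i j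

/-- Concircular curvature tensor of a (0,4)-tensor. -/
noncomputable def concirc04 {n : ℕ} (g G : Fin n → Fin n → ℝ)
    (T : Fin n → Fin n → Fin n → Fin n → ℝ) (m i j k : Fin n) : ℝ :=
  T m i j k - (scalar04 G T / ((n : ℝ) * ((n : ℝ) - 1))) *
    (g m k * g i j - g m j * g i k)

/-! The correction `R̄ - R` is the Kulkarni–Nomizu product `g ⊙ S`. Contracting it with `g⁻¹` gives
`Ric(g ⊙ S) = (n - 2) S + (tr S) g`, hence `sc(g ⊙ S) = 2 (n - 1) tr S`. As `sc` is additive, the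
scalar curvature correction `2 (n - 1) tr S / (n (n - 1)) = 2 tr S / n` is the coefficient in (2.10). -/

open Finset

def kulkarniNomizu {ι : Type*} (h S : ι → ι → ℝ) (m i j k : ι) : ℝ :=
  h m k * S i j - h m j * S i k + h i j * S m k - h i k * S m j

section Contraction

variable {ι : Type*} [Fintype ι]

theorem sum_sum_mul_const_mul (G S : ι → ι → ℝ) (c : ℝ) :
    ∑ m, ∑ k, G m k * (c * S m k) = c * ∑ m, ∑ k, G m k * S m k := by
  simp only [mul_sum, mul_left_comm c]

variable [DecidableEq ι] {g G : ι → ι → ℝ}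

theorem sum_sum_mul_self_of_mul_eq_one (hsymm : ∀ i j, g i j = g j i)
    (hGg : ∀ i j, ∑ k, G i k * g k j = if i = j then (1 : ℝ) else 0) :
    ∑ m, ∑ k, G m k * g m k = Fintype.card ι := by
  have hdiag : ∀ m, ∑ k, G m k * g m k = 1 := fun m => by
    simpa [hsymm m] using hGg m m
  simp [hdiag]

theorem sum_sum_mul_self_mul_const (hsymm : ∀ i j, g i j = g j i)
    (hGg : ∀ i j, ∑ k, G i k * g k j = if i = j then (1 : ℝ) else 0) (c : ℝ) :
    ∑ m, ∑ k, G m k * (g m k * c) = Fintype.card ι * c := by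
  simp_rw [← mul_assoc, ← sum_mul, sum_sum_mul_self_of_mul_eq_one hsymm hGg]

theorem sum_sum_mul_left_mul (hsymm : ∀ i j, g i j = g j i)
    (hgG : ∀ i j, ∑ k, g i k * G k j = if i = j then (1 : ℝ) else 0) (S : ι → ι → ℝ) (i j : ι) :
    ∑ m, ∑ k, G m k * (g m j * S i k) = S i j := by
  have hcol : ∀ k, ∑ m, G m k * g m j = if j = k then 1 else 0 := fun k => by
    rw [← hgG j k]
    exact sum_congr rfl fun m _ => by rw [hsymm m j, mul_comm]
  rw [sum_comm]
  simp_rw [← mul_assoc, ← sum_mul, hcol]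
  simp

theorem sum_sum_mul_right_mul (hsymm : ∀ i j, g i j = g j i)
    (hGg : ∀ i j, ∑ k, G i k * g k j = if i = j then (1 : ℝ) else 0) (S : ι → ι → ℝ) (i j : ι) :
    ∑ m, ∑ k, G m k * (g i k * S m j) = S i j := by
  simp_rw [hsymm i, ← mul_assoc, ← sum_mul, hGg]
  simp

end Contraction

section Curvature

variable {n : ℕ}

theorem ricci04_add (G : Fin n → Fin n → ℝ) (T T' : Fin n → Fin n → Fin n → Fin n → ℝ)
    (i j : Fin n) : ricci04 G (T + T') i j = ricci04 G T i j + ricci04 G T' i j := by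
  simp only [ricci04, Pi.add_apply, mul_add, sum_add_distrib]

theorem scalar04_add (G : Fin n → Fin n → ℝ) (T T' : Fin n → Fin n → Fin n → Fin n → ℝ) :
    scalar04 G (T + T') = scalar04 G T + scalar04 G T' := by
  simp only [scalar04, ricci04_add, mul_add, sum_add_distrib]

theorem concirc04_add (g G : Fin n → Fin n → ℝ) (T T' : Fin n → Fin n → Fin n → Fin n → ℝ)
    (m i j k : Fin n) :
    concirc04 g G (T + T') m i j k = concirc04 g G T m i j k + T' m i j k
      - scalar04 G T' / (n * (n - 1)) * (g m k * g i j - g m j * g i k) := by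
  simp only [concirc04, scalar04_add, Pi.add_apply]
  ring

variable {g G : Fin n → Fin n → ℝ}

theorem ricci04_kulkarniNomizu (hsymm : ∀ i j, g i j = g j i)
    (hgG : ∀ i j, ∑ k, g i k * G k j = if i = j then (1 : ℝ) else 0)
    (hGg : ∀ i j, ∑ k, G i k * g k j = if i = j then (1 : ℝ) else 0) (S : Fin n → Fin n → ℝ)
    (i j : Fin n) :
    ricci04 G (kulkarniNomizu g S) i j
      = (n - 2) * S i j + g i j * ∑ m, ∑ k, G m k * S m k := by
  simp only [ricci04, kulkarniNomizu, mul_add, mul_sub, sum_add_distrib, sum_sub_distrib,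
    sum_sum_mul_self_mul_const hsymm hGg, sum_sum_mul_left_mul hsymm hgG,
    sum_sum_mul_const_mul, sum_sum_mul_right_mul hsymm hGg, Fintype.card_fin]
  ring

theorem scalar04_kulkarniNomizu (hsymm : ∀ i j, g i j = g j i)
    (hgG : ∀ i j, ∑ k, g i k * G k j = if i = j then (1 : ℝ) else 0)
    (hGg : ∀ i j, ∑ k, G i k * g k j = if i = j then (1 : ℝ) else 0) (S : Fin n → Fin n → ℝ) :
    scalar04 G (kulkarniNomizu g S) = 2 * (n - 1) * ∑ m, ∑ k, G m k * S m k := by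
  simp only [scalar04, ricci04_kulkarniNomizu hsymm hgG hGg, mul_add, sum_add_distrib,
    sum_sum_mul_const_mul, sum_sum_mul_self_mul_const hsymm hGg, Fintype.card_fin]
  ring

end Curvature

/-- Equation (2.10): `Z̄_{mijk} = Z_{mijk} + g_{mk}S_{ij} − g_{mj}S_{ik}
+ g_{ij}S_{mk} − g_{ik}S_{mj} − (2S/n)(g_{mk}g_{ij} − g_{mj}g_{ik})`. -/
theorem stmt_10 (n : ℕ) (hn : 2 ≤ n) (g G : Fin n → Fin n → ℝ)
    (hsymm : ∀ i j, g i j = g j i)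
    (hgG : ∀ i j, (∑ k, g i k * G k j) = if i = j then (1 : ℝ) else 0)
    (hGg : ∀ i j, (∑ k, G i k * g k j) = if i = j then (1 : ℝ) else 0)
    (R : Fin n → Fin n → Fin n → Fin n → ℝ)
    (S : Fin n → Fin n → ℝ)
    (Rbar : Fin n → Fin n → Fin n → Fin n → ℝ)
    (hRbar : ∀ m i j k, Rbar m i j k =
      R m i j k + g m k * S i j - g m j * S i k + g i j * S m k - g i k * S m j) :
    ∀ m i j k, concirc04 g G Rbar m i j k =
      concirc04 g G R m i j k
        + g m k * S i j - g m j * S i k + g i j * S m k - g i k * S m j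
        - (2 * (∑ m', ∑ k', G m' k' * S m' k') / (n : ℝ)) *
            (g m k * g i j - g m j * g i k) := by
  intro m i j k
  have hRbar : Rbar = R + kulkarniNomizu g S := by
    funext m i j k
    simp only [hRbar, Pi.add_apply, kulkarniNomizu]
    ring
  have hn1 : (n : ℝ) - 1 ≠ 0 := by
    have : (2 : ℝ) ≤ n := by exact_mod_cast hn
    linarith
  have hcoef : ∀ t : ℝ, 2 * (n - 1) * t / (n * (n - 1)) = 2 * t / n := fun t => by
    field_simp
  rw [hRbar, concirc04_add, scalar04_kulkarniNomizu hsymm hgG hGg, hcoef]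
  simp only [kulkarniNomizu]
  ring
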